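/- Let n ≥ 1 and let N ≥ 3 be an integer. If a matrix g ∈ GL_n(ℤ) has finite order and g is congruent to the identity matrix modulo N, then g is the identity matrix. Equivalently, the kernel of the reduction homomorphism GL_n(ℤ) → GL_n(ℤ/Nℤ) is torsion-free. -/

import Mathlib

open Finset

lemma serre_aux_pow_entry_dvd {n : ℕ} (B : Matrix (Fin n) (Fin n) ℤ) (d : ℤ)
    (hB : ∀ i j, d ∣ B i j) : ∀ k, ∀ i j, d ^ (k + 1) ∣ (B ^ (k + 1)) i j := by
  intro k
  induction k with
  | zero => simpa using hB
  | succ k ih =>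
    intro i j
    have hE : (B ^ (k + 1 + 1)) i j = ∑ l, (B ^ (k + 1)) i l * B l j := by
      rw [pow_succ, Matrix.mul_apply]
    rw [hE, pow_succ]
    exact Finset.dvd_sum fun l _ => mul_dvd_mul (ih i l) (hB l j)

lemma serre_aux_cast_entry {n : ℕ} (B : Matrix (Fin n) (Fin n) ℤ) (c : ℕ) (i j : Fin n) :
    (B * ((c : ℕ) : Matrix (Fin n) (Fin n) ℤ)) i j = (c : ℤ) * B i j := by
  rw [← (Nat.cast_commute c B).eq, ← nsmul_eq_mul, Matrix.smul_apply, nsmul_eq_mul]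

lemma serre_aux_step {n q p : ℕ} (hq : q.Prime) (hp : p.Prime)
    (B : Matrix (Fin n) (Fin n) ℤ) (hpow : (B + 1) ^ p = 1)
    (r : ℕ) (hr1 : 1 ≤ r) (hr2 : q = 2 → 2 ≤ r)
    (hB : ∀ i j, (q : ℤ) ^ r ∣ B i j) :
    ∀ i j, (q : ℤ) ^ (r + 1) ∣ B i j := by
  obtain ⟨k, rfl⟩ : ∃ k, p = k + 2 := ⟨p - 2, by have := hp.two_le; omega⟩
  have hsum := (Commute.one_right B).add_pow (k + 2)
  rw [hpow, Finset.sum_range_succ', Finset.sum_range_succ'] at hsum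
  simp only [one_pow, mul_one, zero_add, pow_zero, pow_one, Nat.choose_zero_right,
    Nat.cast_one, Nat.choose_one_right] at hsum
  -- hsum : 1 = ∑ l in range (k+1), B^(l+1+1) * ↑((k+2).choose (l+1+1)) + B * ↑(k+2) + 1
  have h0 : (∑ l ∈ range (k + 1),
        B ^ (l + 2) * (((k + 2).choose (l + 2) : ℕ) : Matrix (Fin n) (Fin n) ℤ))
      + B * ((k + 2 : ℕ) : Matrix (Fin n) (Fin n) ℤ) = 0 := by
    have h2 : (∑ l ∈ range (k + 1),
        B ^ (l + 2) * (((k + 2).choose (l + 2) : ℕ) : Matrix (Fin n) (Fin n) ℤ))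
      + B * ((k + 2 : ℕ) : Matrix (Fin n) (Fin n) ℤ) + 1 = 0 + 1 := by
      rw [zero_add]; exact hsum.symm
    exact add_right_cancel h2
  have hmain : B * ((k + 2 : ℕ) : Matrix (Fin n) (Fin n) ℤ)
      = - ∑ l ∈ range (k + 1),
          B ^ (l + 2) * (((k + 2).choose (l + 2) : ℕ) : Matrix (Fin n) (Fin n) ℤ) :=
    by rw [add_comm] at h0; exact eq_neg_of_add_eq_zero_left h0
  intro i j
  have hentry : ((k + 2 : ℕ) : ℤ) * B i j
      = - ∑ l ∈ range (k + 1), (((k + 2).choose (l + 2) : ℕ) : ℤ) * (B ^ (l + 2)) i j := by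
    have h3 := congrFun (congrFun hmain i) j
    rw [Matrix.neg_apply, Matrix.sum_apply] at h3
    rw [← serre_aux_cast_entry, h3]
    congr 1
    exact Finset.sum_congr rfl fun l _ => serre_aux_cast_entry _ _ i j
  have hpowdvd : ∀ l, (q : ℤ) ^ ((l + 2) * r) ∣ (B ^ (l + 2)) i j := by
    intro l
    have := serre_aux_pow_entry_dvd B ((q : ℤ) ^ r) hB (l + 1) i j
    rwa [← pow_mul, mul_comm] at this
  by_cases hpq : q = k + 2
  · -- p = q
    subst hpq
    have hterm : ∀ l ∈ range (k + 1),
        ((k + 2 : ℕ) : ℤ) ^ (r + 2) ∣ (((k + 2).choose (l + 2) : ℕ) : ℤ) * (B ^ (l + 2)) i j := by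
      intro l hl
      rw [mem_range] at hl
      rcases eq_or_lt_of_le (by omega : l + 2 ≤ k + 2) with he | hlt
      · refine Dvd.dvd.mul_left ?_ _
        refine dvd_trans (pow_dvd_pow _ ?_) (hpowdvd l)
        rcases Nat.eq_or_lt_of_le hq.two_le with h2 | h3
        · have h2r := hr2 h2.symm; nlinarith
        · nlinarith
      · have hd := hq.dvd_choose_self (by omega : l + 2 ≠ 0) hlt
        have h2 : ((k + 2 : ℕ) : ℤ) ^ (2 * r) ∣ (B ^ (l + 2)) i j :=
          dvd_trans (pow_dvd_pow _ (by nlinarith)) (hpowdvd l)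
        have h3 : ((k + 2 : ℕ) : ℤ) ^ (r + 2) ∣ ((k + 2 : ℕ) : ℤ) * ((k + 2 : ℕ) : ℤ) ^ (2 * r) := by
          rw [← pow_succ']
          exact pow_dvd_pow _ (by omega)
        exact dvd_trans h3 (mul_dvd_mul (Int.natCast_dvd_natCast.mpr hd) h2)
    have hdvd : ((k + 2 : ℕ) : ℤ) ^ (r + 2) ∣ ((k + 2 : ℕ) : ℤ) * B i j := by
      rw [hentry]; exact dvd_neg.mpr (Finset.dvd_sum hterm)
    have hqz : ((k + 2 : ℕ) : ℤ) ≠ 0 := by exact_mod_cast hq.ne_zero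
    have h5 : ((k + 2 : ℕ) : ℤ) * ((k + 2 : ℕ) : ℤ) ^ (r + 1) ∣ ((k + 2 : ℕ) : ℤ) * B i j := by
      rwa [← pow_succ']
    exact (mul_dvd_mul_iff_left hqz).mp h5
  · -- p ≠ q
    have hterm : ∀ l ∈ range (k + 1),
        (q : ℤ) ^ (r + 1) ∣ (((k + 2).choose (l + 2) : ℕ) : ℤ) * (B ^ (l + 2)) i j := by
      intro l hl
      exact Dvd.dvd.mul_left (dvd_trans (pow_dvd_pow _ (by nlinarith)) (hpowdvd l)) _
    have hdvd : (q : ℤ) ^ (r + 1) ∣ ((k + 2 : ℕ) : ℤ) * B i j := by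
      rw [hentry]; exact dvd_neg.mpr (Finset.dvd_sum hterm)
    have hco : IsCoprime ((q : ℤ) ^ (r + 1)) ((k + 2 : ℕ) : ℤ) := by
      apply IsCoprime.pow_left
      rw [Nat.isCoprime_iff_coprime]
      exact (Nat.coprime_primes hq hp).mpr hpq
    exact hco.dvd_of_dvd_mul_left hdvd

lemma serre_aux_zero {n q p : ℕ} (hq : q.Prime) (hp : p.Prime)
    (B : Matrix (Fin n) (Fin n) ℤ) (hpow : (B + 1) ^ p = 1)
    (m : ℕ) (hm1 : 1 ≤ m) (hm2 : q = 2 → 2 ≤ m)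
    (hB : ∀ i j, (q : ℤ) ^ m ∣ B i j) : B = 0 := by
  have hall : ∀ s, ∀ i j, (q : ℤ) ^ (m + s) ∣ B i j := by
    intro s
    induction s with
    | zero => simpa using hB
    | succ s ih =>
      have := serre_aux_step hq hp B hpow (m + s) (by omega)
        (fun h => by have := hm2 h; omega) ih
      intro i j
      exact this i j
  ext i j
  simp only [Matrix.zero_apply]
  by_contra hne
  set s := (B i j).natAbs with hs
  have h1 : (q : ℤ) ^ (m + s) ≤ |B i j| :=
    Int.le_of_dvd (abs_pos.mpr hne) ((dvd_abs _ _).mpr (hall s i j))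
  have h2 : |B i j| = (s : ℤ) := Int.abs_eq_natAbs _
  have h3 : (s : ℤ) < (2 : ℤ) ^ s := by exact_mod_cast Nat.lt_two_pow_self (n := s)
  have h4 : (2 : ℤ) ^ s ≤ (q : ℤ) ^ s := by
    apply pow_le_pow_left₀ (by norm_num)
    exact_mod_cast hq.two_le
  have h5 : (q : ℤ) ^ s ≤ (q : ℤ) ^ (m + s) := by
    apply pow_le_pow_right₀ (by exact_mod_cast hq.one_lt.le)
    omega
  linarith

lemma serre_aux_N {N : ℕ} (hN : 3 ≤ N) :
    ∃ q m, q.Prime ∧ 1 ≤ m ∧ (q = 2 → 2 ≤ m) ∧ q ^ m ∣ N := by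
  by_cases h4 : 4 ∣ N
  · exact ⟨2, 2, Nat.prime_two, by omega, fun _ => le_rfl, by simpa using h4⟩
  by_cases h2 : 2 ∣ N
  · -- N = 2 * M, M odd, M ≥ 3
    obtain ⟨M, hM⟩ := h2
    have hModd : ¬ 2 ∣ M := fun ⟨c, hc⟩ => h4 ⟨c, by omega⟩
    have hM3 : 3 ≤ M := by omega
    have hq := Nat.minFac_prime (by omega : M ≠ 1)
    refine ⟨M.minFac, 1, hq, le_rfl, ?_, by simpa using (M.minFac_dvd).mul_left 2 |>.trans (dvd_of_eq hM.symm)⟩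
    intro he
    exact absurd (he ▸ M.minFac_dvd) hModd
  · have hq := Nat.minFac_prime (by omega : N ≠ 1)
    refine ⟨N.minFac, 1, hq, le_rfl, ?_, by simpa using N.minFac_dvd⟩
    intro he
    exact absurd (he ▸ N.minFac_dvd) h2

lemma serre_aux_cong {n N : ℕ} (M : Matrix (Fin n) (Fin n) ℤ) :
    (∀ i j, ((M i j : ZMod N)) = (((1 : Matrix (Fin n) (Fin n) ℤ) i j : ZMod N))) ↔
    M.map (Int.cast : ℤ → ZMod N) = 1 := by
  constructor
  · intro h
    ext i j
    rw [Matrix.map_apply, h i j]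
    by_cases hij : i = j <;> simp [Matrix.one_apply, hij]
  · intro h i j
    have h1 := congrFun (congrFun h i) j
    rw [Matrix.map_apply] at h1
    rw [h1]
    by_cases hij : i = j <;> simp [Matrix.one_apply, hij]

/-- Serre's Lemma: an element of `GL n ℤ` of finite order which is congruent to the
identity modulo an integer `N ≥ 3` is the identity. -/
theorem serre_lemma_congruence_torsion_free
    (n N : ℕ) (hn : 1 ≤ n) (hN : 3 ≤ N)
    (g : Matrix.GeneralLinearGroup (Fin n) ℤ)
    (hfin : IsOfFinOrder g)
    (hcong : ∀ i j, (((g : Matrix (Fin n) (Fin n) ℤ) i j : ZMod N))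
      = (((1 : Matrix (Fin n) (Fin n) ℤ) i j : ZMod N))) :
    g = 1 := by
  obtain ⟨q, m, hq, hm1, hm2, hqm⟩ := serre_aux_N hN
  suffices H : ∀ k, ∀ g : Matrix.GeneralLinearGroup (Fin n) ℤ, orderOf g ≤ k → IsOfFinOrder g →
      (∀ i j, (((g : Matrix (Fin n) (Fin n) ℤ) i j : ZMod N))
        = (((1 : Matrix (Fin n) (Fin n) ℤ) i j : ZMod N))) → g = 1 by
    exact H (orderOf g) g le_rfl hfin hcong
  intro k
  induction k with
  | zero =>
    intro g hle hfin' _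
    exact absurd (Nat.le_zero.mp hle) hfin'.orderOf_pos.ne'
  | succ k ih =>
    intro g hle hfin' hcong'
    rcases eq_or_ne (orderOf g) 1 with h1 | h1
    · exact orderOf_eq_one_iff.mp h1
    have hpos := hfin'.orderOf_pos
    have hp : (orderOf g).minFac.Prime := Nat.minFac_prime h1
    set p := (orderOf g).minFac with hp_def
    have hpdvd : p ∣ orderOf g := Nat.minFac_dvd _
    by_cases hpe : orderOf g = p
    · -- prime order: use the core lemma
      have hgp : ((g : Matrix (Fin n) (Fin n) ℤ)) ^ p = 1 := by
        rw [← Units.val_pow_eq_pow_val, ← hpe, pow_orderOf_eq_one, Units.val_one]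
      have hB : ∀ i j, (q : ℤ) ^ m ∣ ((g : Matrix (Fin n) (Fin n) ℤ) - 1) i j := by
        intro i j
        have hmod := ((ZMod.intCast_eq_intCast_iff _ _ N).mp (hcong' i j)).dvd
        have hNq : ((q : ℤ)) ^ m ∣ (N : ℤ) := by
          have : ((q ^ m : ℕ) : ℤ) ∣ ((N : ℕ) : ℤ) := Int.natCast_dvd_natCast.mpr hqm
          simpa using this
        have := hNq.trans hmod
        have h6 : ((g : Matrix (Fin n) (Fin n) ℤ) - 1) i j
            = -(((1 : Matrix (Fin n) (Fin n) ℤ)) i j - (g : Matrix (Fin n) (Fin n) ℤ) i j) := by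
          simp [Matrix.sub_apply]
        rw [h6]
        exact dvd_neg.mpr this
      have hz := serre_aux_zero hq hp ((g : Matrix (Fin n) (Fin n) ℤ) - 1)
        (by simpa using hgp) m hm1 hm2 hB
      have : (g : Matrix (Fin n) (Fin n) ℤ) = 1 := by
        have := sub_eq_zero.mp hz
        exact this
      exact Units.ext this
    · -- composite order: pass to g ^ p
      have hh1 : (g ^ p) ^ (orderOf g / p) = 1 := by
        rw [← pow_mul, Nat.mul_div_cancel' hpdvd, pow_orderOf_eq_one]
      have hho : orderOf (g ^ p) ∣ orderOf g / p := orderOf_dvd_of_pow_eq_one hh1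
      have hdivpos : 0 < orderOf g / p := Nat.div_pos (Nat.le_of_dvd hpos hpdvd) hp.pos
      have hle' : orderOf (g ^ p) ≤ k := by
        have h7 := Nat.le_of_dvd hdivpos hho
        have h8 : p * (orderOf g / p) = orderOf g := Nat.mul_div_cancel' hpdvd
        have h9 := hp.two_le
        -- orderOf g / p < orderOf g ≤ k + 1
        nlinarith [hpos]
      have hcong'' : ∀ i j, ((((g ^ p : Matrix.GeneralLinearGroup (Fin n) ℤ) : Matrix (Fin n) (Fin n) ℤ) i j : ZMod N))
          = (((1 : Matrix (Fin n) (Fin n) ℤ) i j : ZMod N)) := by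
        rw [serre_aux_cong]
        have hmap1 : (Int.castRingHom (ZMod N)).mapMatrix (g : Matrix (Fin n) (Fin n) ℤ) = 1 :=
          (serre_aux_cong _).mp hcong'
        rw [Units.val_pow_eq_pow_val]
        show (Int.castRingHom (ZMod N)).mapMatrix ((g : Matrix (Fin n) (Fin n) ℤ) ^ p) = 1
        rw [map_pow, hmap1, one_pow]
      have hgp1 := ih (g ^ p) hle' hfin'.pow hcong''
      have hdv : orderOf g ∣ p := orderOf_dvd_of_pow_eq_one hgp1
      rcases (Nat.Prime.eq_one_or_self_of_dvd hp _ hdv) with h | h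
      · exact absurd h h1
      · exact absurd h hpe
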